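/- Let d ≥ 1, let A be a symmetric d×d real matrix with operator norm ‖A‖ ≤ 1 and maximum column norm ‖A‖_{1→2} ≤ 1, and let η > 0, ε ∈ ℝ. Then for every integer T ≥ 1, ‖E[B_T]‖ ≤ (1 + 2η) ‖E[B_{T−1}]‖ + η² d² ‖diag(E[B_{T−1}])‖. -/

import Mathlib

open Matrix BigOperators

/-- The rank-one sample matrix `A_{(i,j)} = d² A_{ij} e_i e_jᵀ`. -/
noncomputable def sampleMat {d : ℕ} (A : Matrix (Fin d) (Fin d) ℝ) (p : Fin d × Fin d) :
    Matrix (Fin d) (Fin d) ℝ :=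
  ((d : ℝ) ^ 2 * A p.1 p.2) • Matrix.single p.1 p.2 1

/-- `P_T(ω) = (I + η A_{(i_T,j_T)}) ⋯ (I + η A_{(i_1,j_1)})`. -/
noncomputable def prodMat {d : ℕ} (A : Matrix (Fin d) (Fin d) ℝ) (η : ℝ) :
    (T : ℕ) → (Fin T → Fin d × Fin d) → Matrix (Fin d) (Fin d) ℝ
  | 0, _ => 1
  | (T + 1), ω => (1 + η • sampleMat A (ω (Fin.last T))) * prodMat A η T (fun t => ω t.castSucc)

/-- `E[B_T]`: the average of `P_T(ω)ᵀ ((1-ε)I - A) P_T(ω)` over all sequences `ω`. -/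
noncomputable def EB {d : ℕ} (A : Matrix (Fin d) (Fin d) ℝ) (η ε : ℝ) (T : ℕ) :
    Matrix (Fin d) (Fin d) ℝ :=
  (Fintype.card (Fin T → Fin d × Fin d) : ℝ)⁻¹ •
    ∑ ω : Fin T → Fin d × Fin d,
      (prodMat A η T ω)ᵀ * ((1 - ε) • (1 : Matrix (Fin d) (Fin d) ℝ) - A) * prodMat A η T ω

/-- The operator (spectral) norm of a matrix, as a map on Euclidean space. -/
noncomputable def opNorm {d : ℕ} (M : Matrix (Fin d) (Fin d) ℝ) : ℝ :=
  ‖Matrix.toEuclideanCLM (𝕜 := ℝ) M‖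

/-- The maximum Euclidean column norm `‖M‖_{1→2} = max_j ‖M e_j‖₂`. -/
noncomputable def colNorm {d : ℕ} (M : Matrix (Fin d) (Fin d) ℝ) : ℝ :=
  ⨆ j : Fin d, Real.sqrt (∑ i : Fin d, (M i j) ^ 2)

/-- `diag(M)`: the diagonal matrix with the same diagonal as `M`. -/
def diagPart {d : ℕ} (M : Matrix (Fin d) (Fin d) ℝ) : Matrix (Fin d) (Fin d) ℝ :=
  Matrix.diagonal M.diag

/-! Conditioning on the first sampled pair `p` gives the one-step recursion
`E[B_{T+1}] = E[(I + η A_p)ᵀ E[B_T] (I + η A_p)]`. Since `E[A_p] = A` and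
`A_{(i,j)}ᵀ B A_{(i,j)} = d⁴ A_{ij}² B_{ii} e_j e_jᵀ`, this equals
`E[B_T] + η (A E[B_T] + E[B_T] A) + η² d² diag_j (∑_i A_{ij}² E[B_T]_{ii})`.
The middle term costs `2η ‖E[B_T]‖` because `‖A‖ ≤ 1`, and the diagonal term is bounded
entrywise by `‖diag(E[B_T])‖` because every column of `A` has Euclidean norm at most `1`. -/

section Sampling

variable {d : ℕ} (A : Matrix (Fin d) (Fin d) ℝ)

lemma sampleMat_eq_single (p : Fin d × Fin d) :
    sampleMat A p = single p.1 p.2 ((d : ℝ) ^ 2 * A p.1 p.2) := by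
  simp [sampleMat]

lemma sum_sampleMat : ∑ p, sampleMat A p = (d : ℝ) ^ 2 • A := by
  simp_rw [Fintype.sum_prod_type, sampleMat_eq_single, sum_sum_single]
  rfl

lemma sum_sampleMat_transpose_mul_mul (B : Matrix (Fin d) (Fin d) ℝ) :
    ∑ p, (sampleMat A p)ᵀ * B * sampleMat A p
      = (d : ℝ) ^ 4 • diagonal fun j => ∑ i, A i j ^ 2 * B i i := by
  ext a b
  simp only [Fintype.sum_prod_type, sampleMat_eq_single, transpose_single, single_mul_mul_single,
    Matrix.sum_apply, single_apply, Matrix.smul_apply, diagonal_apply, smul_eq_mul]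
  split_ifs with hab
  · subst hab
    simp only [and_self, Finset.sum_ite_eq', Finset.mem_univ, if_true, Finset.mul_sum]
    exact Finset.sum_congr rfl fun i _ => by ring
  · rw [mul_zero]
    exact Finset.sum_eq_zero fun i _ => Finset.sum_eq_zero fun j _ =>
      if_neg fun h => hab (h.1.symm.trans h.2)

variable (η : ℝ)

lemma prodMat_succ_cons (T : ℕ) (p : Fin d × Fin d) (ω : Fin T → Fin d × Fin d) :
    prodMat A η (T + 1) (Fin.cons p ω) = prodMat A η T ω * (1 + η • sampleMat A p) := by
  induction T with
  | zero => simp [prodMat]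
  | succ T ih =>
    have hinit : (fun t : Fin (T + 1) => (Fin.cons p ω : Fin (T + 2) → _) t.castSucc)
        = Fin.cons p fun t => ω t.castSucc := by
      funext t
      cases t using Fin.cases <;> simp
    rw [prodMat, hinit, ih, Fin.cons_last, ← mul_assoc]
    rfl

lemma sum_conj_one_add_smul_sampleMat (hA : A.IsSymm) (B : Matrix (Fin d) (Fin d) ℝ) :
    ∑ p, (1 + η • sampleMat A p)ᵀ * B * (1 + η • sampleMat A p)
      = (d : ℝ) ^ 2 • (B + η • (A * B + B * A)
          + (η ^ 2 * (d : ℝ) ^ 2) • diagonal fun j => ∑ i, A i j ^ 2 * B i i) := by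
  have hexpand : ∀ S : Matrix (Fin d) (Fin d) ℝ, (1 + η • S)ᵀ * B * (1 + η • S)
      = B + η • (Sᵀ * B + B * S) + η ^ 2 • (Sᵀ * B * S) := by
    intro S
    simp only [transpose_add, transpose_one, transpose_smul, add_mul, mul_add, one_mul, mul_one,
      Matrix.smul_mul, Matrix.mul_smul, smul_add, smul_smul, ← sq]
    abel
  have hcard : ∑ _p : Fin d × Fin d, B = (d : ℝ) ^ 2 • B := by
    rw [Finset.sum_const, Finset.card_univ, Fintype.card_prod, Fintype.card_fin, ← sq,
      ← Nat.cast_smul_eq_nsmul ℝ, Nat.cast_pow]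
  have htranspose : ∑ p, (sampleMat A p)ᵀ = (d : ℝ) ^ 2 • A := by
    rw [← transpose_sum, sum_sampleMat, transpose_smul, hA]
  simp only [hexpand, Finset.sum_add_distrib, ← Finset.smul_sum, ← Finset.sum_mul,
    ← Finset.mul_sum, hcard, htranspose, sum_sampleMat, sum_sampleMat_transpose_mul_mul,
    Matrix.smul_mul, Matrix.mul_smul]
  module

variable (ε : ℝ)

lemma EB_succ (T : ℕ) :
    EB A η ε (T + 1) = ((d : ℝ) ^ 2)⁻¹ •
      ∑ p, (1 + η • sampleMat A p)ᵀ * EB A η ε T * (1 + η • sampleMat A p) := by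
  have hcard : (Fintype.card (Fin (T + 1) → Fin d × Fin d) : ℝ)
      = (d : ℝ) ^ 2 * Fintype.card (Fin T → Fin d × Fin d) := by
    simp only [Fintype.card_fun, Fintype.card_prod, Fintype.card_fin]
    push_cast
    ring
  rw [EB, EB, ← (Fin.consEquiv fun _ => Fin d × Fin d).sum_comp, Fintype.sum_prod_type, hcard,
    mul_inv, mul_smul]
  have hstep : ∀ p ω, (prodMat A η (T + 1) (Fin.cons p ω))ᵀ *
      ((1 - ε) • (1 : Matrix (Fin d) (Fin d) ℝ) - A) * prodMat A η (T + 1) (Fin.cons p ω)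
        = (1 + η • sampleMat A p)ᵀ * ((prodMat A η T ω)ᵀ *
          ((1 - ε) • (1 : Matrix (Fin d) (Fin d) ℝ) - A) * prodMat A η T ω) *
            (1 + η • sampleMat A p) := by
    intro p ω
    rw [prodMat_succ_cons, transpose_mul]
    simp only [Matrix.mul_assoc]
  simp only [Fin.consEquiv, Equiv.coe_fn_mk, hstep, Finset.mul_sum, Finset.sum_mul,
    Matrix.mul_smul, Matrix.smul_mul, Finset.smul_sum]

lemma EB_succ_eq_add (hA : A.IsSymm) (T : ℕ) :
    EB A η ε (T + 1) = EB A η ε T + η • (A * EB A η ε T + EB A η ε T * A)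
      + (η ^ 2 * (d : ℝ) ^ 2) • diagonal fun j => ∑ i, A i j ^ 2 * EB A η ε T i i := by
  rcases eq_or_ne d 0 with rfl | hd
  · exact Subsingleton.elim _ _
  rw [EB_succ, sum_conj_one_add_smul_sampleMat A η hA, inv_smul_smul₀ (by positivity)]

end Sampling

open scoped Matrix.Norms.L2Operator

lemma opNorm_eq_norm {d : ℕ} (M : Matrix (Fin d) (Fin d) ℝ) : opNorm M = ‖M‖ := rfl

lemma norm_add_smul_anticommutator_le {R : Type*} [NormedRing R] [NormedAlgebra ℝ R]
    {a : R} (ha : ‖a‖ ≤ 1) (b : R) {η : ℝ} (hη : 0 ≤ η) :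
    ‖b + η • (a * b + b * a)‖ ≤ (1 + 2 * η) * ‖b‖ := by
  have hab : ‖a * b‖ ≤ ‖b‖ := (norm_mul_le a b).trans (mul_le_of_le_one_left (norm_nonneg b) ha)
  have hba : ‖b * a‖ ≤ ‖b‖ := (norm_mul_le b a).trans (mul_le_of_le_one_right (norm_nonneg b) ha)
  calc ‖b + η • (a * b + b * a)‖ ≤ ‖b‖ + η * (‖a * b‖ + ‖b * a‖) := by
        grw [norm_add_le, norm_smul, Real.norm_of_nonneg hη, norm_add_le]
    _ ≤ (1 + 2 * η) * ‖b‖ := by nlinarith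

section Norms

variable {d : ℕ}

lemma colNorm_nonneg (A : Matrix (Fin d) (Fin d) ℝ) : 0 ≤ colNorm A :=
  Real.iSup_nonneg fun _ => Real.sqrt_nonneg _

lemma sum_sq_le_colNorm_sq (A : Matrix (Fin d) (Fin d) ℝ) (j : Fin d) :
    ∑ i, A i j ^ 2 ≤ colNorm A ^ 2 := by
  have hj : Real.sqrt (∑ i, A i j ^ 2) ≤ colNorm A :=
    le_ciSup (f := fun j => Real.sqrt (∑ i, A i j ^ 2)) (Set.finite_range _).bddAbove j
  rw [← Real.sq_sqrt (Finset.sum_nonneg fun i _ => sq_nonneg (A i j))]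
  exact pow_le_pow_left₀ (Real.sqrt_nonneg _) hj 2

lemma norm_diagonal_sum_sq_mul_diag_le (A B : Matrix (Fin d) (Fin d) ℝ) :
    ‖(diagonal fun j => ∑ i, A i j ^ 2 * B i i)‖ ≤ colNorm A ^ 2 * ‖diagPart B‖ := by
  rw [l2_opNorm_diagonal, diagPart, l2_opNorm_diagonal]
  refine (pi_norm_le_iff_of_nonneg (by positivity)).mpr fun j => ?_
  calc ‖∑ i, A i j ^ 2 * B i i‖ ≤ ∑ i, A i j ^ 2 * ‖B.diag‖ := by
        refine (norm_sum_le _ _).trans (Finset.sum_le_sum fun i _ => ?_)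
        rw [norm_mul, Real.norm_of_nonneg (sq_nonneg _)]
        exact mul_le_mul_of_nonneg_left (norm_le_pi_norm B.diag i) (sq_nonneg _)
    _ ≤ colNorm A ^ 2 * ‖B.diag‖ := by
        rw [← Finset.sum_mul]
        exact mul_le_mul_of_nonneg_right (sum_sq_le_colNorm_sq A j) (norm_nonneg _)

end Norms

theorem stmt6_general {d : ℕ} (A : Matrix (Fin d) (Fin d) ℝ) (hsymm : A.IsSymm)
    (hAop : opNorm A ≤ 1) (hAcol : colNorm A ≤ 1) (η ε : ℝ) (hη : 0 < η)
    (T : ℕ) (hT : 1 ≤ T) :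
    opNorm (EB A η ε T)
      ≤ (1 + 2 * η) * opNorm (EB A η ε (T - 1))
        + η ^ 2 * (d : ℝ) ^ 2 * opNorm (diagPart (EB A η ε (T - 1))) := by
  obtain ⟨T, rfl⟩ : ∃ S, T = S + 1 := ⟨T - 1, by omega⟩
  rw [Nat.add_sub_cancel]
  simp only [opNorm_eq_norm] at hAop ⊢
  have hcol : colNorm A ^ 2 ≤ 1 := pow_le_one₀ (colNorm_nonneg A) hAcol
  rw [EB_succ_eq_add A η ε hsymm]
  grw [norm_add_le, norm_add_smul_anticommutator_le hAop _ hη.le, norm_smul,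
    Real.norm_of_nonneg (by positivity), norm_diagonal_sum_sq_mul_diag_le, hcol, one_mul]

theorem stmt6 {d : ℕ} (hd : 1 ≤ d) (A : Matrix (Fin d) (Fin d) ℝ) (hsymm : A.IsSymm)
    (hAop : opNorm A ≤ 1) (hAcol : colNorm A ≤ 1) (η ε : ℝ) (hη : 0 < η)
    (T : ℕ) (hT : 1 ≤ T) :
    opNorm (EB A η ε T)
      ≤ (1 + 2 * η) * opNorm (EB A η ε (T - 1))
        + η ^ 2 * (d : ℝ) ^ 2 * opNorm (diagPart (EB A η ε (T - 1))) :=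
  stmt6_general A hsymm hAop hAcol η ε hη T hT
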